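/- Let (M, □) be a sober T_{1/2}-algebra. Then M is atomic (every nonzero element of M lies above an atom) if and only if the frame O(M) is spatial. -/
import Mathlib


universe u

/-- An MT-algebra: a complete Boolean algebra equipped with an interior operator. -/
structure MTAlg (M : Type u) [CompleteBooleanAlgebra M] where
  box : M → M
  box_top : box ⊤ = ⊤
  box_inf : ∀ a b : M, box (a ⊓ b) = box a ⊓ box b
  box_le : ∀ a : M, box a ≤ a
  box_idem : ∀ a : M, box a ≤ box (box a)

namespace MTAlg

variable {M : Type u} [CompleteBooleanAlgebra M] (T : MTAlg M)

/-- The closure operator `◇a = (□(aᶜ))ᶜ`. -/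
def dia (a : M) : M := (T.box aᶜ)ᶜ

/-- An element is open if `□a = a`. -/
def IsOp (a : M) : Prop := T.box a = a

/-- An element is closed if `◇a = a`. -/
def IsCl (a : M) : Prop := T.dia a = a

/-- The set `O(M)` of open elements. -/
def opens : Set M := {a | T.IsOp a}

/-- The set `C(M)` of closed elements. -/
def closeds : Set M := {a | T.IsCl a}

/-- A subset join-generates `M` if every element of `M` is a supremum of a subset of it. -/
def JoinGenerates (S : Set M) : Prop := ∀ a : M, ∃ B ⊆ S, a = sSup B

theorem box_mono {a b : M} (h : a ≤ b) : T.box a ≤ T.box b := by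
  have hab : a ⊓ b = a := inf_eq_left.mpr h
  calc T.box a = T.box (a ⊓ b) := by rw [hab]
    _ = T.box a ⊓ T.box b := T.box_inf a b
    _ ≤ T.box b := inf_le_right

theorem isOp_sSup {S : Set M} (h : ∀ a ∈ S, T.IsOp a) : T.IsOp (sSup S) := by
  refine le_antisymm (T.box_le _) (sSup_le fun a ha => ?_)
  calc a = T.box a := (h a ha).symm
    _ ≤ T.box (sSup S) := T.box_mono (le_sSup ha)

theorem atom_le_sSup {x : M} (hx : IsAtom x) {S : Set M} (h : x ≤ sSup S) :
    ∃ s ∈ S, x ≤ s := by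
  by_contra hc
  push_neg at hc
  have h2 : ∀ b ∈ S, x ⊓ b = ⊥ := by
    intro b hb
    rcases hx.le_iff.mp (inf_le_left : x ⊓ b ≤ x) with h' | h'
    · exact h'
    · exact absurd (h' ▸ inf_le_right) (hc b hb)
  have h3 : x ⊓ sSup S = ⊥ := by
    rw [inf_sSup_eq]
    simp only [iSup_eq_bot]
    intro b hb
    exact h2 b hb
  have hx' : x = ⊥ := by
    rw [inf_eq_left.mpr h] at h3
    exact h3
  exact hx.1 hx'

/-- `η(a)` : the set of atoms below `a`. -/
def eta (a : M) : Set {x : M // IsAtom x} := {x | (x : M) ≤ a}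

/-- The topology `τ = {η(a) | a ∈ O(M)}` on the set of atoms of `M`. -/
def atomTopology : TopologicalSpace {x : M // IsAtom x} where
  IsOpen U := ∃ a : M, T.IsOp a ∧ U = eta a
  isOpen_univ := ⟨⊤, T.box_top, by ext x; simp [eta]⟩
  isOpen_inter := by
    rintro U V ⟨a, ha, rfl⟩ ⟨b, hb, rfl⟩
    refine ⟨a ⊓ b, ?_, ?_⟩
    · show T.box (a ⊓ b) = a ⊓ b
      rw [T.box_inf, ha, hb]
    · ext x
      simp [eta, le_inf_iff]
  isOpen_sUnion := by
    intro C hC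
    refine ⟨sSup {a | T.IsOp a ∧ eta a ∈ C}, T.isOp_sSup (fun a ha => ha.1), ?_⟩
    ext x
    constructor
    · rintro ⟨U, hU, hxU⟩
      obtain ⟨a, ha, rfl⟩ := hC U hU
      exact le_trans hxU (le_sSup ⟨ha, hU⟩)
    · intro hx
      obtain ⟨s, hs, hxs⟩ := atom_le_sSup x.2 hx
      exact ⟨eta s, hs.2, hxs⟩

/-- A completely prime filter of the frame `O(M)` (with arbitrary suprema computed in `M`). -/
structure IsCPF (p : Set M) : Prop where
  subset_opens : p ⊆ T.opens
  top_mem : ⊤ ∈ p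
  bot_notMem : ⊥ ∉ p
  mem_of_le : ∀ a ∈ p, ∀ b ∈ T.opens, a ≤ b → b ∈ p
  inf_mem : ∀ a ∈ p, ∀ b ∈ p, a ⊓ b ∈ p
  prime : ∀ S ⊆ T.opens, sSup S ∈ p → ∃ s ∈ S, s ∈ p

/-- The underlying set of `θ(x) = {a ∈ O(M) | x ≤ a}`. -/
def thetaSet (x : M) : Set M := {a | T.IsOp a ∧ x ≤ a}

/-- An element is saturated if it is an infimum of a set of open elements. -/
def IsSat (a : M) : Prop := ∃ S ⊆ T.opens, a = sInf S

/-- Weakly locally closed: the infimum of a saturated element and a closed element. -/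
def IsWLC (a : M) : Prop := ∃ s c : M, T.IsSat s ∧ T.IsCl c ∧ a = s ⊓ c

/-- Locally closed: the infimum of an open element and a closed element. -/
def IsLC (a : M) : Prop := ∃ u c : M, T.IsOp u ∧ T.IsCl c ∧ a = u ⊓ c

/-- `M` is a `T₀`-algebra if the weakly locally closed elements join-generate `M`. -/
def T0 : Prop := JoinGenerates {a | T.IsWLC a}

/-- `M` is a `T_{1/2}`-algebra if the locally closed elements join-generate `M`. -/
def THalf : Prop := JoinGenerates {a | T.IsLC a}

/-- `M` is a `T₁`-algebra if the closed elements join-generate `M`. -/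
def T1 : Prop := JoinGenerates T.closeds

/-- A join-irreducible element of `C(M)`. -/
def JoinIrred (p : M) : Prop :=
  T.IsCl p ∧ p ≠ ⊥ ∧ ∀ a b : M, T.IsCl a → T.IsCl b → p = a ⊔ b → p = a ∨ p = b

/-- `M` is weakly sober if every join-irreducible element of `C(M)` is `◇x` for some atom `x`. -/
def WeaklySober : Prop := ∀ p : M, T.JoinIrred p → ∃ x : M, IsAtom x ∧ p = T.dia x

/-- `M` is sober if it is weakly sober and a `T₀`-algebra. -/
def Sober : Prop := T.WeaklySober ∧ T.T0

/-- `a ∈ GC(M)` : `a` is approximated from above by regular closed elements. -/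
def IsGC (a : M) : Prop := a = sInf {b | ∃ c : M, a ≤ T.box c ∧ b = T.dia (T.box c)}

/-- `M` is a Hausdorff (T₂) algebra if `GC(M)` join-generates `M`. -/
def Hausdorff : Prop := JoinGenerates {a | T.IsGC a}

/-- `a ◁ b` iff `◇a ≤ □b`. -/
def tri (a b : M) : Prop := T.dia a ≤ T.box b

/-- `M` is a regular (T₃) algebra. -/
def Regular : Prop :=
  T.T1 ∧ ∀ a : M, T.IsOp a → a = sSup {b | T.IsOp b ∧ T.tri b a}

/-- `a ◁◁ b` : there is a family `(c_p)` indexed by `p ∈ ℚ ∩ [0,1]` interpolating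
between `a` and `b` with `c_p ◁ c_q` whenever `p < q`. -/
def triQ (a b : M) : Prop :=
  ∃ c : ℚ → M, a ≤ c 0 ∧ c 1 ≤ b ∧
    ∀ p q : ℚ, 0 ≤ p → p < q → q ≤ 1 → T.tri (c p) (c q)

/-- `M` is a completely regular (T₃½) algebra. -/
def CompletelyRegular : Prop :=
  T.T1 ∧ ∀ a : M, T.IsOp a → a = sSup {b | T.IsOp b ∧ T.triQ b a}

/-- The pseudocomplement of `b` in the frame `O(M)`. -/
def pstarO (b : M) : M := sSup {u | T.IsOp u ∧ u ⊓ b = ⊥}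

/-- The rather-below relation `b ≺ a` in the frame `O(M)`. -/
def precO (b a : M) : Prop := T.pstarO b ⊔ a = ⊤

/-- The completely-below relation `b ≺≺ a` in the frame `O(M)`. -/
def precQO (b a : M) : Prop :=
  ∃ c : ℚ → M, (∀ p : ℚ, 0 ≤ p → p ≤ 1 → T.IsOp (c p)) ∧ b ≤ c 0 ∧ c 1 ≤ a ∧
    ∀ p q : ℚ, 0 ≤ p → p < q → q ≤ 1 → T.precO (c p) (c q)

/-- The frame `O(M)` is completely regular. -/
def FrameCompletelyRegular : Prop :=
  ∀ a : M, T.IsOp a → a = sSup {b | T.IsOp b ∧ T.precQO b a}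

/-- `M` is a normal (T₄) algebra. -/
def Normal : Prop :=
  T.T1 ∧ ∀ c d : M, T.IsCl c → T.IsCl d → c ⊓ d = ⊥ →
    ∃ a b : M, T.IsOp a ∧ T.IsOp b ∧ a ⊓ b = ⊥ ∧ c ≤ a ∧ d ≤ b

end MTAlg


namespace MTAlg

variable {M : Type u} [CompleteBooleanAlgebra M] (T : MTAlg M)

theorem le_dia (a : M) : a ≤ T.dia a := by
  have h := compl_le_compl (T.box_le aᶜ)
  rwa [compl_compl] at h

theorem dia_mono {a b : M} (h : a ≤ b) : T.dia a ≤ T.dia b :=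
  compl_le_compl (T.box_mono (compl_le_compl h))

theorem isCl_compl_of_isOp {u : M} (hu : T.IsOp u) : T.IsCl uᶜ := by
  show T.dia uᶜ = uᶜ
  rw [dia, compl_compl, hu]

theorem isOp_compl_of_isCl {c : M} (hc : T.IsCl c) : T.IsOp cᶜ := by
  have : (T.box cᶜ)ᶜ = c := hc
  have := congrArg compl this
  rwa [compl_compl] at this

end MTAlg

/-- a sober `T_{1/2}`-algebra is atomic iff the frame `O(M)` is spatial. -/
theorem statement9 {M : Type u} [CompleteBooleanAlgebra M] (T : MTAlg M)
    (hsob : T.Sober) (hhalf : T.THalf) :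
    (∀ a : M, a ≠ ⊥ → ∃ x : M, IsAtom x ∧ x ≤ a) ↔
      (∀ a b : M, a ∈ T.opens → b ∈ T.opens → ¬ a ≤ b →
        ∃ p : Set M, T.IsCPF p ∧ a ∈ p ∧ b ∉ p) := by
  constructor
  · -- atomic → spatial
    intro hatomic a b ha hb hab
    have hne : a ⊓ bᶜ ≠ ⊥ := by
      intro h
      have h2 : a ≤ bᶜᶜ := le_compl_iff_disjoint_right.mpr (disjoint_iff.mpr h)
      rw [compl_compl] at h2
      exact hab h2
    obtain ⟨x, hx, hxab⟩ := hatomic _ hne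
    refine ⟨{u | T.IsOp u ∧ x ≤ u}, ⟨?_, ?_, ?_, ?_, ?_, ?_⟩, ⟨ha, hxab.trans inf_le_left⟩, ?_⟩
    · intro u hu; exact hu.1
    · exact ⟨T.box_top, le_top⟩
    · rintro ⟨-, hxbot⟩
      exact hx.1 (le_bot_iff.mp hxbot)
    · rintro u ⟨-, hxu⟩ v hv huv
      exact ⟨hv, hxu.trans huv⟩
    · rintro u ⟨hu, hxu⟩ v ⟨hv, hxv⟩
      refine ⟨?_, le_inf hxu hxv⟩
      show T.box (u ⊓ v) = u ⊓ v
      rw [T.box_inf, hu, hv]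
    · rintro S hS ⟨-, hxS⟩
      obtain ⟨s, hs, hxs⟩ := MTAlg.atom_le_sSup hx hxS
      exact ⟨s, hs, hS hs, hxs⟩
    · rintro ⟨-, hxb⟩
      have hxbc : x ≤ bᶜ := hxab.trans inf_le_right
      exact hx.1 (le_bot_iff.mp (by
        calc x ≤ b ⊓ bᶜ := le_inf hxb hxbc
          _ = ⊥ := inf_compl_eq_bot))
  · -- spatial → atomic
    intro hspat a hane
    obtain ⟨B, hB, rfl⟩ := hhalf a
    have hex : ∃ e ∈ B, e ≠ ⊥ := by
      by_contra h
      push_neg at h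
      exact hane (le_bot_iff.mp (sSup_le fun e he => (h e he).le))
    obtain ⟨e, heB, hene⟩ := hex
    obtain ⟨u, c, hu, hc, rfl⟩ := hB heB
    have hcc : T.IsOp cᶜ := T.isOp_compl_of_isCl hc
    have hnle : ¬ u ≤ cᶜ := by
      intro h
      exact hene (disjoint_iff.mp (le_compl_iff_disjoint_right.mp h))
    obtain ⟨p, hp, hup, hcp⟩ := hspat u cᶜ hu hcc hnle
    set w : M := sSup {v | T.IsOp v ∧ v ∉ p} with hw
    have hwop : T.IsOp w := T.isOp_sSup fun v hv => hv.1
    have hwnp : w ∉ p := by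
      intro hwp
      obtain ⟨s, hs, hsp⟩ := hp.prime _ (fun v hv => hv.1) hwp
      exact hs.2 hsp
    have hmax : ∀ v : M, T.IsOp v → v ∉ p → v ≤ w := fun v h1 h2 => le_sSup ⟨h1, h2⟩
    -- wᶜ is join-irreducible in C(M)
    have hirr : T.JoinIrred wᶜ := by
      refine ⟨T.isCl_compl_of_isOp hwop, ?_, ?_⟩
      · intro h
        have : w = ⊤ := by
          have := congrArg compl h
          rwa [compl_compl, compl_bot] at this
        exact hwnp (this ▸ hp.top_mem)
      · intro c1 c2 hc1 hc2 heq
        by_contra hcon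
        push_neg at hcon
        have h1 : c1ᶜ ∈ p := by
          by_contra h
          have hle : c1ᶜ ≤ w := hmax _ (T.isOp_compl_of_isCl hc1) h
          have hle1 : c1 ≤ wᶜ := by rw [heq]; exact le_sup_left
          exact hcon.1 (le_antisymm (compl_le_iff_compl_le.mp hle) hle1)
        have h2 : c2ᶜ ∈ p := by
          by_contra h
          have hle : c2ᶜ ≤ w := hmax _ (T.isOp_compl_of_isCl hc2) h
          have hle2 : c2 ≤ wᶜ := by rw [heq]; exact le_sup_right
          exact hcon.2 (le_antisymm (compl_le_iff_compl_le.mp hle) hle2)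
        have := hp.inf_mem _ h1 _ h2
        have hinf : c1ᶜ ⊓ c2ᶜ = w := by
          rw [← compl_sup, ← heq, compl_compl]
        rw [hinf] at this
        exact hwnp this
    obtain ⟨x, hx, hxq⟩ := hsob.1 _ hirr
    refine ⟨x, hx, ?_⟩
    have hxc : x ≤ c := by
      have hccw : cᶜ ≤ w := hmax _ hcc hcp
      have : wᶜ ≤ c := by
        have := compl_le_compl hccw
        rwa [compl_compl] at this
      calc x ≤ T.dia x := T.le_dia x
        _ = wᶜ := hxq.symm
        _ ≤ c := this
    have hxu : x ≤ u := by
      by_contra hxu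
      have hbot : x ⊓ u = ⊥ := by
        rcases hx.le_iff.mp (inf_le_left : x ⊓ u ≤ x) with h | h
        · exact h
        · exact absurd (h ▸ inf_le_right) hxu
      have hxuc : x ≤ uᶜ := le_compl_iff_disjoint_right.mpr (disjoint_iff.mpr hbot)
      have : T.dia x ≤ uᶜ := by
        calc T.dia x ≤ T.dia uᶜ := T.dia_mono hxuc
          _ = uᶜ := T.isCl_compl_of_isOp hu
      have huw : u ≤ w := by
        have := compl_le_compl (hxq ▸ this : wᶜ ≤ uᶜ)
        rwa [compl_compl, compl_compl] at this
      exact hwnp (hp.mem_of_le _ hup _ hwop huw)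
    exact (le_inf hxu hxc).trans (le_sSup heB)
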